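/- arXiv:2007.03489 — 5 statements merged into one kernel-verified Lean document; each statement's English description precedes it below -/
import Mathlib

section
/- Let f(u,v) be a polynomial in two variables u,v over a commutative ring containing ℚ, and let F(u) be the unique polynomial such that F(n) = ∑_{j=0}^{n-1} f(j, n-j) for all integers n ≥ 1. Then for all n ≥ 1, F(-n) = - ∑_{j=1}^{n} f(-j, -n+j). -/
/-!
Write `f(j, n - j) = g(n, j)` for the bivariate polynomial `g(x, y) = f(y, x - y)`. Over a
`ℚ`-algebra every polynomial has a discrete antiderivative (built from Bernoulli polynomials),
so there is `S(x, y)` with `S(x, y + 1) - S(x, y) = g(x, y)`. Telescoping gives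
`F(n) = S(n, n) - S(n, 0)` for `n ≥ 1`, hence `F(x) = S(x, x) - S(x, 0)` as polynomials, because a
polynomial over a `ℚ`-algebra vanishing at all large integers is zero (the Vandermonde determinant
at consecutive integers is a superfactorial, hence invertible). Telescoping downwards instead,
`S(x, -n) - S(x, 0) = -∑_{j=1}^{n} g(x, -j)`, and `x = -n` gives the claim.
-/

open Polynomial Finset Filter

theorem Nat.superFactorial_ne_zero (n : ℕ) : n.superFactorial ≠ 0 := by
  induction n <;> simp [Nat.superFactorial_succ, Nat.factorial_ne_zero, *]

theorem isUnit_natCast_of_ne_zero {A : Type*} [Ring A] [Algebra ℚ A] {n : ℕ} (hn : n ≠ 0) :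
    IsUnit (n : A) := by
  simpa using (IsUnit.mk0 (n : ℚ) (Nat.cast_ne_zero.2 hn)).map (algebraMap ℚ A)

namespace Polynomial

section RatAlgebra

variable {A : Type*} [CommRing A] [Algebra ℚ A]

theorem eq_zero_of_eventually_eval_natCast_eq_zero {p : A[X]}
    (h : ∀ᶠ n : ℕ in atTop, p.eval (n : A) = 0) : p = 0 := by
  obtain ⟨m, hm⟩ := eventually_atTop.1 h
  set d := p.natDegree
  let V := Matrix.vandermonde fun i : Fin (d + 1) ↦ (i : A) + m
  have hV : IsUnit V := by
    rw [Matrix.isUnit_iff_isUnit_det, Matrix.det_vandermonde_add,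
      Matrix.det_vandermonde_id_eq_superFactorial]
    exact isUnit_natCast_of_ne_zero (Nat.superFactorial_ne_zero d)
  have hcoeff : (fun j : Fin (d + 1) ↦ p.coeff j) = 0 := by
    refine Matrix.mulVec_injective_of_isUnit hV ?_
    ext i
    have := hm (i + m) (by omega)
    rw [eval_eq_sum_range' (Nat.lt_succ_self d), ← Fin.sum_univ_eq_sum_range] at this
    simpa [V, Matrix.mulVec, dotProduct, Matrix.vandermonde_apply, mul_comm] using this
  ext j
  by_cases hj : j ≤ d
  · simpa using congrFun hcoeff ⟨j, Nat.lt_succ_of_le hj⟩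
  · exact coeff_eq_zero_of_natDegree_lt (not_le.1 hj)

theorem exists_comp_one_add_X_sub_eq (g : A[X]) : ∃ S : A[X], S.comp (1 + X) - S = g := by
  induction g using Polynomial.induction_on' with
  | add g₁ g₂ h₁ h₂ =>
    obtain ⟨S₁, hS₁⟩ := h₁
    obtain ⟨S₂, hS₂⟩ := h₂
    exact ⟨S₁ + S₂, by rw [add_comp, ← hS₁, ← hS₂]; abel⟩
  | monomial p a =>
    have hB : ((bernoulli (p + 1)).map (algebraMap ℚ A)).comp (1 + X) -
        (bernoulli (p + 1)).map (algebraMap ℚ A) = ((p + 1 : ℕ) : A[X]) * X ^ p := by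
      have h1X : (1 + X : A[X]) = (1 + X : ℚ[X]).map (algebraMap ℚ A) := by simp
      rw [h1X, ← Polynomial.map_comp, bernoulli_comp_one_add_X]
      simp [nsmul_eq_mul]
    obtain ⟨u, hu⟩ := isUnit_natCast_of_ne_zero (A := A) (Nat.succ_ne_zero p)
    refine ⟨C (a * ↑u⁻¹) * (bernoulli (p + 1)).map (algebraMap ℚ A), ?_⟩
    rw [mul_comp, C_comp, ← mul_sub, hB, ← map_natCast C, ← hu, ← mul_assoc, ← C_mul, mul_assoc,
      Units.inv_mul, mul_one, C_mul_X_pow_eq_monomial]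

end RatAlgebra

section Telescoping

variable {A : Type*} [CommRing A] {S g : A[X]}

theorem eval_one_add_sub_eval_of_comp_one_add_X_sub_eq (h : S.comp (1 + X) - S = g) (a : A) :
    S.eval (1 + a) - S.eval a = g.eval a := by
  simpa [eval_comp] using congrArg (eval a) h

theorem eval_natCast_of_comp_one_add_X_sub_eq (h : S.comp (1 + X) - S = g) (n : ℕ) :
    S.eval (n : A) = S.eval 0 + ∑ k ∈ range n, g.eval (k : A) := by
  induction n with
  | zero => simp
  | succ n ih =>
    rw [sum_range_succ, ← add_assoc, ← ih, ← eval_one_add_sub_eval_of_comp_one_add_X_sub_eq h,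
      Nat.cast_succ, add_comm (n : A)]
    abel

theorem eval_neg_natCast_of_comp_one_add_X_sub_eq (h : S.comp (1 + X) - S = g) (n : ℕ) :
    S.eval (-(n : A)) = S.eval 0 - ∑ k ∈ Icc 1 n, g.eval (-(k : A)) := by
  induction n with
  | zero => simp
  | succ n ih =>
    rw [sum_Icc_succ_top (by omega), sub_add_eq_sub_sub, ← ih,
      ← eval_one_add_sub_eval_of_comp_one_add_X_sub_eq h]
    push_cast
    ring_nf

end Telescoping

section BivariateTelescoping

variable {R : Type*} [CommRing R] {S g : R[X][X]}

theorem evalEval_natCast_of_comp_one_add_X_sub_eq (h : S.comp (1 + X) - S = g) (x : R) (n : ℕ) :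
    S.evalEval x n = S.evalEval x 0 + ∑ k ∈ range n, g.evalEval x k := by
  simp only [evalEval, map_natCast, map_zero]
  rw [eval_natCast_of_comp_one_add_X_sub_eq h, eval_add, eval_finsetSum]

theorem evalEval_neg_natCast_of_comp_one_add_X_sub_eq (h : S.comp (1 + X) - S = g) (x : R)
    (n : ℕ) : S.evalEval x (-n) = S.evalEval x 0 - ∑ k ∈ Icc 1 n, g.evalEval x (-k) := by
  simp only [evalEval, map_neg, map_natCast, map_zero]
  rw [eval_neg_natCast_of_comp_one_add_X_sub_eq h, eval_sub, eval_finsetSum]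

end BivariateTelescoping

section Bivariate

variable {R : Type*} [CommSemiring R]

theorem eval_eval_X (x : R) (S : R[X][X]) : (S.eval X).eval x = S.evalEval x x := by
  rw [← map_evalRingHom_eval, eval_map, ← coe_evalRingHom, eval, hom_eval₂]
  simp

theorem evalEval_aeval {σ : Type*} (x y : R) (v : σ → R[X][X]) (f : MvPolynomial σ R) :
    (MvPolynomial.aeval v f).evalEval x y = MvPolynomial.eval (fun i ↦ (v i).evalEval x y) f := by
  rw [← coe_aevalAeval_eq_evalEval, MvPolynomial.comp_aeval_apply, MvPolynomial.aeval_eq_eval]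

end Bivariate

theorem eval_neg_natCast_of_eval_natCast_eq_sum_evalEval {R : Type*} [CommRing R] [Algebra ℚ R]
    {F : R[X]} {g : R[X][X]}
    (hF : ∀ n : ℕ, 1 ≤ n → F.eval (n : R) = ∑ j ∈ range n, g.evalEval (n : R) (j : R)) (n : ℕ) :
    F.eval (-(n : R)) = -∑ j ∈ Icc 1 n, g.evalEval (-n : R) (-j : R) := by
  obtain ⟨S, hS⟩ := exists_comp_one_add_X_sub_eq g
  have hT (x : R) : (S.eval X - S.eval 0).eval x = S.evalEval x x - S.evalEval x 0 := by
    simp only [eval_sub, eval_eval_X, evalEval, map_zero]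
  have hFS : F = S.eval X - S.eval 0 := by
    rw [← sub_eq_zero]
    refine eq_zero_of_eventually_eval_natCast_eq_zero ?_
    filter_upwards [eventually_ge_atTop 1] with m hm
    rw [eval_sub, hT, evalEval_natCast_of_comp_one_add_X_sub_eq hS, hF m hm]
    ring
  rw [hFS, hT, evalEval_neg_natCast_of_comp_one_add_X_sub_eq hS]
  ring

end Polynomial

/-- **Lemma 2.2** (polynomial interpolation lemma).
Let `f(u,v)` be a polynomial in two variables over a commutative ring containing `ℚ`,
and let `F(u)` be the (unique) polynomial with `F(n) = ∑_{j=0}^{n-1} f(j, n-j)` for all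
integers `n ≥ 1`.  Then for all `n ≥ 1` we have `F(-n) = - ∑_{j=1}^{n} f(-j, -n+j)`. -/
theorem stmt0 {R : Type*} [CommRing R] [Algebra ℚ R]
    (f : MvPolynomial (Fin 2) R) (F : Polynomial R)
    (hF : ∀ n : ℕ, 1 ≤ n →
      F.eval (n : R) =
        ∑ j ∈ Finset.range n, MvPolynomial.eval ![(j : R), ((n - j : ℕ) : R)] f) :
    ∀ n : ℕ, 1 ≤ n →
      F.eval (-(n : R)) =
        - ∑ j ∈ Finset.Icc 1 n, MvPolynomial.eval ![-(j : R), -(n : R) + (j : R)] f := by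
  set g : R[X][X] := MvPolynomial.aeval ![X, C X - X] f
  have hg (x y : R) : g.evalEval x y = MvPolynomial.eval ![y, x - y] f := by
    have hv : (fun i ↦ (![X, C X - X] i).evalEval x y) = ![y, x - y] := by
      funext i
      fin_cases i <;> simp [evalEval_C]
    rw [evalEval_aeval, hv]
  have hFg (n : ℕ) (hn : 1 ≤ n) :
      F.eval (n : R) = ∑ j ∈ range n, g.evalEval (n : R) (j : R) := by
    rw [hF n hn]
    exact sum_congr rfl fun j hj ↦ by rw [hg, Nat.cast_sub (mem_range.1 hj).le]
  intro n _
  rw [eval_neg_natCast_of_eval_natCast_eq_sum_evalEval hFg]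
  simp only [hg, sub_neg_eq_add]
end

section
/- Let f(x) be a formal power series over a field of characteristic zero with nonzero coefficient of x (so x·f(x) or similar setups make the relevant coefficients well-defined), and let k ≥ 1 be a natural number. Then for all integers m ≥ 1: (1/m)·[coefficient of x^{m-k} in f(x)^m] = (1/k)·∑_{n_1+⋯+n_k=m, n_i ≥ 1} ∏_{i=1}^{k} (1/n_i)·[coefficient of x^{n_i - 1} in f(x)^{n_i}]. -/
/-!
Let `g` be the power series with `g(0) = 0` and `g = X · f(g)`: the compositional inverse of
`X / f` when `f(0) ≠ 0`, and `g = 0` otherwise. Lagrange inversion `m [x^m] g^k = k [x^{m-k}] f^m`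
follows by strong induction on `m`: writing `g^k = X^k · (f^k)(g)` expresses `[x^m] g^k` through
the coefficients `[x^{m-k}] g^j` with `j ≤ m - k`, and the induction closes with the derivative
identity `(p + q) · (f^p)' · f^q = p · (f^{p+q})'`. For `k = 1` this identifies the coefficients of
`g` as `(1/n) [x^{n-1}] f^n`, and expanding `[x^m] g^k` over compositions of `m` into `k` positive
parts gives the theorem.
-/

open PowerSeries Finset

theorem Derivation.add_nsmul_apply_pow_mul_pow {R A : Type*} [CommSemiring R] [CommSemiring A]
    [Algebra R A] (D : Derivation R A A) (a : A) (p q : ℕ) :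
    (p + q) • (D (a ^ p) * a ^ q) = p • D (a ^ (p + q)) := by
  rcases p with _ | p
  · simp
  · rw [D.leibniz_pow, D.leibniz_pow, smul_eq_mul, smul_eq_mul, nsmul_eq_mul, nsmul_eq_mul,
      nsmul_eq_mul, nsmul_eq_mul, Nat.add_sub_cancel, show p + 1 + q - 1 = p + q by omega, pow_add]
    push_cast
    ring

namespace PowerSeries

section CommSemiring

variable {R : Type*} [CommSemiring R]

theorem coeff_X_mul_derivative (f : R⟦X⟧) (n : ℕ) :
    coeff n (X * d⁄dX R f) = n * coeff n f := by
  rcases n with _ | n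
  · simp
  · rw [coeff_succ_X_mul, coeff_derivative]
    push_cast
    ring

theorem add_mul_sum_antidiagonal_coeff_pow (f : R⟦X⟧) (p q n : ℕ) :
    (p + q : R) * ∑ ij ∈ antidiagonal n, ij.1 * coeff ij.1 (f ^ p) * coeff ij.2 (f ^ q) =
      p * n * coeff n (f ^ (p + q)) := by
  have h := congrArg (fun φ => coeff n (X * φ)) ((d⁄dX R).add_nsmul_apply_pow_mul_pow f p q)
  rw [mul_smul_comm, mul_smul_comm, map_nsmul, map_nsmul, ← mul_assoc, coeff_mul,
    coeff_X_mul_derivative] at h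
  simp only [coeff_X_mul_derivative, nsmul_eq_mul, Nat.cast_add] at h
  rw [h]
  ring

theorem coeff_pow_eq_zero_of_lt {g : R⟦X⟧} (hg : constantCoeff g = 0) {n d : ℕ} (h : n < d) :
    coeff n (g ^ d) = 0 := by
  obtain ⟨g, rfl⟩ := X_dvd_iff.mpr hg
  rw [mul_pow, coeff_X_pow_mul', if_neg (by omega)]

theorem coeff_pow_eq_sum_compositions {φ : R⟦X⟧} (hφ : constantCoeff φ = 0) (k m : ℕ) :
    coeff m (φ ^ k) =
      ∑ c ∈ (Fintype.piFinset fun _ : Fin k => range (m + 1)).filter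
          (fun c => ∑ i, c i = m ∧ ∀ i, 1 ≤ c i),
        ∏ i, coeff (c i) φ := by
  classical
  have hpos (c : Fin k → ℕ) (hc : ∏ i, coeff (c i) φ ≠ 0) (i : Fin k) : 1 ≤ c i := by
    by_contra! h
    refine hc (prod_eq_zero (mem_univ i) ?_)
    rw [Nat.lt_one_iff.mp h, coeff_zero_eq_constantCoeff_apply, hφ]
  rw [← filter_filter, sum_filter_of_ne fun c _ hc => hpos c hc, ← Fin.prod_const, coeff_prod]
  refine sum_equiv Finsupp.equivFunOnFinite (fun l => ?_) (fun _ _ => rfl)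
  simp only [mem_finsuppAntidiag, subset_univ, and_true, mem_filter, Fintype.mem_piFinset,
    mem_range, Finsupp.equivFunOnFinite_apply, iff_and_self, Nat.lt_succ_iff]
  exact fun hl i => hl ▸ single_le_sum (fun j _ => Nat.zero_le (l j)) (mem_univ i)

end CommSemiring

section CommRing

variable {R : Type*} [CommRing R]

theorem coeff_subst_of_constantCoeff_zero {g : R⟦X⟧} (hg : constantCoeff g = 0) (f : R⟦X⟧)
    (n : ℕ) : coeff n (f.subst g) = ∑ d ∈ range (n + 1), coeff d f * coeff n (g ^ d) := by
  rw [coeff_subst' (HasSubst.of_constantCoeff_zero' hg)]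
  refine finsum_eq_sum_of_support_subset _ fun d hd => ?_
  simp only [Function.mem_support, coe_range, Set.mem_Iio] at hd ⊢
  by_contra! hnd
  exact hd (by rw [coeff_pow_eq_zero_of_lt hg (by omega), smul_zero])

theorem natCast_mul_coeff_pow_of_eq_X_mul_subst [IsDomain R] [CharZero R] {f g : R⟦X⟧}
    (hg0 : constantCoeff g = 0) (hg : g = X * f.subst g) {k m : ℕ} (hk : 1 ≤ k) (hkm : k ≤ m) :
    (m : R) * coeff m (g ^ k) = k * coeff (m - k) (f ^ m) := by
  induction m using Nat.strong_induction_on generalizing k with | _ m ih => ?_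
  obtain ⟨n, rfl⟩ : ∃ n, m = k + n := ⟨m - k, by omega⟩
  have hexpand :
      coeff (k + n) (g ^ k) = ∑ j ∈ range (n + 1), coeff j (f ^ k) * coeff n (g ^ j) := by
    rw [show g ^ k = X ^ k * (f ^ k).subst g by
        rw [subst_pow (HasSubst.of_constantCoeff_zero' hg0), ← mul_pow, ← hg],
      coeff_X_pow_mul', if_pos (by omega), Nat.add_sub_cancel_left,
      coeff_subst_of_constantCoeff_zero hg0]
  rw [Nat.add_sub_cancel_left]
  rcases Nat.eq_zero_or_pos n with rfl | hn
  · rw [add_zero] at hexpand ⊢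
    simp [hexpand]
  have hterm : ∀ j ∈ range (n + 1), (n : R) * (coeff j (f ^ k) * coeff n (g ^ j)) =
      j * coeff j (f ^ k) * coeff (n - j) (f ^ n) := by
    intro j hj
    rcases Nat.eq_zero_or_pos j with rfl | hj0
    · simp [coeff_one, hn.ne']
    · rw [mul_left_comm, ih n (by omega) hj0 (by simpa [Nat.lt_succ_iff] using hj)]
      ring
  have hkey := add_mul_sum_antidiagonal_coeff_pow f k n n
  rw [Nat.sum_antidiagonal_eq_sum_range_succ_mk] at hkey
  refine mul_left_cancel₀ (Nat.cast_ne_zero.mpr hn.ne' : (n : R) ≠ 0) ?_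
  calc (n : R) * ((k + n : ℕ) * coeff (k + n) (g ^ k))
      = (k + n) * ∑ j ∈ range (n + 1), n * (coeff j (f ^ k) * coeff n (g ^ j)) := by
        rw [hexpand, ← mul_sum]; push_cast; ring
    _ = (k + n) * ∑ j ∈ range (n + 1), j * coeff j (f ^ k) * coeff (n - j) (f ^ n) := by
        rw [sum_congr rfl hterm]
    _ = n * (k * coeff n (f ^ (k + n))) := by
        rw [hkey]; ring

end CommRing

theorem exists_eq_X_mul_subst {K : Type*} [Field K] (f : K⟦X⟧) :
    ∃ g : K⟦X⟧, constantCoeff g = 0 ∧ g = X * f.subst g := by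
  by_cases hf : constantCoeff f = 0
  · exact ⟨0, map_zero _, by rw [subst_zero_of_constantCoeff_zero hf, mul_zero]⟩
  set P : K⟦X⟧ := X * f⁻¹
  have hP0 : constantCoeff P = 0 := by simp [P]
  have hP1 : IsUnit (coeff 1 P) := by simp [P, hf]
  have hg := HasSubst.substInvOfIsUnit P hP1
  set g := P.substInvOfIsUnit hP1
  refine ⟨g, constantCoeff_substInvOfIsUnit P hP1, ?_⟩
  have hPg : g * f⁻¹.subst g = X := by
    nth_rewrite 1 [← subst_X (R := K) hg]
    rw [← subst_mul hg]
    exact subst_substInvOfIsUnit_right P hP0 hP1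
  have hff : f⁻¹.subst g * f.subst g = 1 := by
    rw [← subst_mul hg, PowerSeries.inv_mul_cancel _ hf, ← coe_substAlgHom hg, map_one]
  calc g = g * (f⁻¹.subst g * f.subst g) := by rw [hff, mul_one]
    _ = X * f.subst g := by rw [← mul_assoc, hPg]

end PowerSeries

/-- **Lemma 4.4** (a consequence of Lagrange inversion).
For a formal power series `f` over a field of characteristic zero, `k ≥ 1` and all `m ≥ 1`:
`(1/m)·[f^m]_{x^{m-k}} = (1/k)·∑_{n₁+⋯+n_k = m, nᵢ ≥ 1} ∏ᵢ (1/nᵢ)·[f^{nᵢ}]_{x^{nᵢ-1}}`,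
where the coefficient of a negative power of `x` is interpreted as `0` (the case `m < k`). -/
theorem stmt1 {K : Type*} [Field K] [CharZero K] (f : PowerSeries K) (k : ℕ) (hk : 1 ≤ k) :
    ∀ m : ℕ, 1 ≤ m →
      (m : K)⁻¹ * (if k ≤ m then PowerSeries.coeff (R := K) (m - k) (f ^ m) else 0) =
        (k : K)⁻¹ *
          ∑ c ∈ (Fintype.piFinset fun _ : Fin k => Finset.range (m + 1)).filter
              (fun c => (∑ i, c i) = m ∧ ∀ i, 1 ≤ c i),
            ∏ i, ((c i : K)⁻¹ * PowerSeries.coeff (R := K) (c i - 1) (f ^ (c i))) := by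
  intro m hm
  obtain ⟨g, hg0, hg⟩ := exists_eq_X_mul_subst f
  have hcoeff_g (n : ℕ) (hn : 1 ≤ n) : coeff n g = (n : K)⁻¹ * coeff (n - 1) (f ^ n) := by
    have h := natCast_mul_coeff_pow_of_eq_X_mul_subst hg0 hg le_rfl hn
    rw [pow_one, Nat.cast_one, one_mul] at h
    rw [← h, inv_mul_cancel_left₀ (Nat.cast_ne_zero.mpr (by omega))]
  have hsum : coeff m (g ^ k) = _ := (coeff_pow_eq_sum_compositions hg0 k m).trans <|
    sum_congr rfl fun c hc => prod_congr rfl fun i _ => hcoeff_g _ ((mem_filter.mp hc).2.2 i)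
  rw [← hsum]
  split_ifs with hkm
  · have h := natCast_mul_coeff_pow_of_eq_X_mul_subst hg0 hg hk hkm
    have hm0 : (m : K) ≠ 0 := Nat.cast_ne_zero.mpr (by omega)
    have hk0 : (k : K) ≠ 0 := Nat.cast_ne_zero.mpr (by omega)
    field_simp
    linear_combination h.symm
  · rw [coeff_pow_eq_zero_of_lt hg0 (by omega), mul_zero, mul_zero]
end

section
/- Define φ_{m,n} ∈ ℚ[p^{±1/2}][[q]] for integers m,n by the differential equation D_τ φ_{m,n} = m n φ_m φ_n F + (D_τ φ_m)(D_τ φ_n) together with vanishing constant term φ_{m,n} = O(q), where φ_m are the solutions of D_τ^2 φ_m = m^2 F φ_m with constant term p^{m/2}-p^{-m/2}. Then for all m, n with m + n ≠ 0: φ_{m,n} = (m/(m+n)) φ_m D_τ(φ_n) + (n/(m+n)) D_τ(φ_m) φ_n. -/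
/-!
`D_τ = q d/dq` is a derivation whose kernel consists of the constants, so it suffices to
compare constant terms (both vanish) and `D_τ` of both sides. Applying `D_τ` to the right side
and using `D_τ² φ = m² F φ`, the product `D_τφ_m · D_τφ_n` appears with weight
`m/(m+n) + n/(m+n) = 1` and `φ_m φ_n F` with weight `(m n² + n m²)/(m+n) = m n`.
-/

noncomputable section

open LaurentPolynomial

/-- `ℚ[p^{±1/2}]` as Laurent polynomials in `s = p^{1/2}`, so `p^{m/2} = T m`. -/
abbrev L : Type := LaurentPolynomial ℚ

/-- `D_τ = q d/dq` on `ℚ[p^{±1/2}][[q]]`. -/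
def Dtau (f : PowerSeries L) : PowerSeries L :=
  PowerSeries.mk fun n => (n : ℚ) • PowerSeries.coeff (R := L) n f

/-- `F = D_τ²Θ/Θ = -∑_{n≥1} ∑_{d|n} (n/d)^3 (p^{d/2}-p^{-d/2})^2 q^n`. -/
def Fser : PowerSeries L :=
  PowerSeries.mk fun n =>
    -∑ d ∈ n.divisors, ((n / d : ℕ) : ℚ) ^ 3 • (T (d : ℤ) - T (-(d : ℤ))) ^ 2

theorem Derivation.apply_weighted_sum_of_sq_smul {K A : Type*} [Field K] [CommRing A]
    [Algebra K A] (D : Derivation K A A) {a b : K} (hab : a + b ≠ 0) {F x y : A}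
    (hx : D (D x) = a ^ 2 • (F * x)) (hy : D (D y) = b ^ 2 • (F * y)) :
    D ((a / (a + b)) • (x * D y) + (b / (a + b)) • (D x * y)) =
      (a * b) • (x * y * F) + D x * D y := by
  simp only [map_add, map_smul, Derivation.leibniz, hx, hy, smul_eq_mul]
  have hab_mul : a * b = a / (a + b) * b ^ 2 + b / (a + b) * a ^ 2 := by field_simp; ring
  have hab_one : (1 : K) = a / (a + b) + b / (a + b) := by field_simp
  rw [hab_mul]
  conv_rhs => rw [← one_smul K (D x * D y), hab_one]
  simp only [add_smul, smul_add, mul_smul, mul_smul_comm]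
  ring_nf

open PowerSeries

@[simp]
lemma coeff_Dtau (k : ℕ) (f : PowerSeries L) : coeff k (Dtau f) = (k : ℚ) • coeff k f :=
  coeff_mk _ _

@[simp]
lemma constantCoeff_Dtau (f : PowerSeries L) : constantCoeff (Dtau f) = 0 := by
  rw [← coeff_zero_eq_constantCoeff_apply, coeff_Dtau, Nat.cast_zero, zero_smul]

def dtauDerivation : Derivation ℚ (PowerSeries L) (PowerSeries L) :=
  Derivation.restrictScalars ℚ ((X : PowerSeries L) • derivative L)

lemma dtauDerivation_apply (f : PowerSeries L) : dtauDerivation f = Dtau f := by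
  refine PowerSeries.ext fun k => ?_
  rcases k with _ | k
  · simp [dtauDerivation]
  · simp [dtauDerivation, coeff_succ_X_mul, coeff_derivative, Algebra.smul_def, mul_comm]

lemma eq_of_Dtau_eq {f g : PowerSeries L} (h0 : coeff 0 f = coeff 0 g)
    (hD : Dtau f = Dtau g) : f = g := by
  refine PowerSeries.ext fun k => ?_
  rcases k with _ | k
  · exact h0
  · have hk := congrArg (coeff (k + 1)) hD
    simp only [coeff_Dtau] at hk
    exact smul_right_injective L (r := (k : ℚ) + 1) (Nat.cast_add_one_ne_zero k)
      (by exact_mod_cast hk)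

theorem stmt8_general (m n : ℤ) (hmn : m + n ≠ 0) (φm φn φmn : PowerSeries L)
    (hm : Dtau (Dtau φm) = ((m : ℚ) ^ 2) • (Fser * φm))
    (hn : Dtau (Dtau φn) = ((n : ℚ) ^ 2) • (Fser * φn))
    (hmnc : PowerSeries.coeff (R := L) 0 φmn = 0)
    (hmn' : Dtau φmn = ((m : ℚ) * (n : ℚ)) • (φm * φn * Fser) + Dtau φm * Dtau φn) :
    φmn = ((m : ℚ) / ((m : ℚ) + (n : ℚ))) • (φm * Dtau φn)
        + ((n : ℚ) / ((m : ℚ) + (n : ℚ))) • (Dtau φm * φn) := by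
  have hmn_rat : (m : ℚ) + n ≠ 0 := by exact_mod_cast hmn
  refine eq_of_Dtau_eq ?_ ?_
  · simp [hmnc]
  · simp only [← dtauDerivation_apply] at hm hn hmn' ⊢
    rw [hmn', dtauDerivation.apply_weighted_sum_of_sq_smul hmn_rat hm hn]

/-- **Proposition 4.1.** Let `φ_m, φ_n` solve `D_τ² φ_m = m² F φ_m` with constant terms
`p^{m/2}-p^{-m/2}`, and let `φ_{m,n}` solve `D_τ φ_{m,n} = mn φ_m φ_n F + (D_τφ_m)(D_τφ_n)`
with vanishing constant term.  If `m + n ≠ 0` then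
`φ_{m,n} = (m/(m+n)) φ_m D_τ(φ_n) + (n/(m+n)) D_τ(φ_m) φ_n`. -/
theorem stmt8 (m n : ℤ) (hmn : m + n ≠ 0) (φm φn φmn : PowerSeries L)
    (hmc : PowerSeries.coeff (R := L) 0 φm = T m - T (-m))
    (hm : Dtau (Dtau φm) = ((m : ℚ) ^ 2) • (Fser * φm))
    (hnc : PowerSeries.coeff (R := L) 0 φn = T n - T (-n))
    (hn : Dtau (Dtau φn) = ((n : ℚ) ^ 2) • (Fser * φn))
    (hmnc : PowerSeries.coeff (R := L) 0 φmn = 0)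
    (hmn' : Dtau φmn = ((m : ℚ) * (n : ℚ)) • (φm * φn * Fser) + Dtau φm * Dtau φn) :
    φmn = ((m : ℚ) / ((m : ℚ) + (n : ℚ))) • (φm * Dtau φn)
        + ((n : ℚ) / ((m : ℚ) + (n : ℚ))) • (Dtau φm * φn) :=
  stmt8_general m n hmn φm φn φmn hm hn hmnc hmn'

end
end

section
/- Let g(y) = ∑_{m≥1} (φ_m/m) y^m be the compositional inverse of y = 1/f(x) where f(x) = Θ(x+z)/Θ(x). Suppose the derivation d/dA on the coefficient ring satisfies (d/dA) f(x) = x·f(x) (as established from the commutation relation [d/dA, D_z] = 2·ind applied to Θ). Then (d/dA) g(y) = g(y)·D_y g(y), where D_y = y d/dy. Equivalently, for all m ≥ 1: (d/dA) φ_m = (1/2) ∑_{i+j=m, i,j ≥ 1} (m^2/(i j)) φ_i φ_j. -/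
noncomputable section

/-- Composition `f ∘ g` of formal power series (intended for `g` with zero constant term,
in which case it agrees with the substitution of `g` into `f`). -/
def pcomp {R : Type*} [CommRing R] (f g : PowerSeries R) : PowerSeries R :=
  PowerSeries.mk fun N =>
    ∑ n ∈ Finset.range (N + 1), PowerSeries.coeff n f * PowerSeries.coeff N (g ^ n)

/-- Coefficient-wise extension of the derivation `d/dA` on `R` to power series. -/
def Dc {R : Type*} [CommRing R] [Algebra ℚ R] (D : Derivation ℚ R R) (f : PowerSeries R) :
    PowerSeries R :=
  PowerSeries.mk fun n => D (PowerSeries.coeff n f)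

/-- The operator `D_y = y d/dy`. -/
def Dy {R : Type*} [CommRing R] (f : PowerSeries R) : PowerSeries R :=
  PowerSeries.mk fun n => n • PowerSeries.coeff n f

/-!
With `h = x · f(x)`, `f(g(y)) = 1/y` reads `X · h(g) = g` and `(d/dA) f = x f` reads
`(d/dA) h = X · h`. Applying `d/dA`, resp. `D_y`, to `X · h(g) = g` and using the chain rule,
both `v = (d/dA) g` and `v = g · D_y g` solve `v = g² + X · h'(g) · v`. The difference `w` of
the two satisfies `w = X · h'(g) · w`, which forces `w = 0` coefficient by coefficient.
-/

open PowerSeries Finset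

section

variable {R : Type*} [CommRing R]

lemma coeff_pow_mul_eq_zero_of_lt {g : R⟦X⟧} (hg0 : coeff 0 g = 0) (u : R⟦X⟧) {n N : ℕ}
    (hN : N < n) : coeff N (g ^ n * u) = 0 := by
  rw [mul_comm]
  refine coeff_mul_of_lt_order (lt_of_lt_of_le (b := (n : ℕ∞)) (by exact_mod_cast hN) ?_)
  exact le_order_pow_of_constantCoeff_eq_zero n (by rwa [← coeff_zero_eq_constantCoeff_apply])

lemma sum_range_coeff_pow_mul_of_lt {g : R⟦X⟧} (hg0 : coeff 0 g = 0) (c : ℕ → R) (u : R⟦X⟧)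
    {N M : ℕ} (hM : N < M) :
    ∑ n ∈ range M, c n * coeff N (g ^ n * u) = ∑ n ∈ range (N + 1), c n * coeff N (g ^ n * u) := by
  refine (sum_subset (range_subset_range.mpr hM) fun n _ hn => ?_).symm
  rw [coeff_pow_mul_eq_zero_of_lt hg0 u (by simpa using hn), mul_zero]

lemma coeff_pcomp_of_lt {g : R⟦X⟧} (hg0 : coeff 0 g = 0) (h : R⟦X⟧) {N M : ℕ} (hM : N < M) :
    coeff N (pcomp h g) = ∑ n ∈ range M, coeff n h * coeff N (g ^ n) := by
  simpa [pcomp] using (sum_range_coeff_pow_mul_of_lt hg0 (fun n => coeff n h) 1 hM).symm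

lemma coeff_pcomp_mul {g : R⟦X⟧} (hg0 : coeff 0 g = 0) (h u : R⟦X⟧) {N M : ℕ} (hM : N < M) :
    coeff N (pcomp h g * u) = ∑ n ∈ range M, coeff n h * coeff N (g ^ n * u) := by
  rw [sum_range_coeff_pow_mul_of_lt hg0 _ u hM, coeff_mul]
  have hle : ∀ p ∈ antidiagonal N, p.1 < N + 1 := fun p hp => by
    have := mem_antidiagonal.mp hp; omega
  simp_rw [coeff_mul, mul_sum]
  rw [sum_congr rfl fun p hp => by rw [coeff_pcomp_of_lt hg0 h (hle p hp), sum_mul], sum_comm]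
  exact sum_congr rfl fun n _ => sum_congr rfl fun p _ => by ring

lemma pcomp_X_mul {g : R⟦X⟧} (hg0 : coeff 0 g = 0) (h : R⟦X⟧) :
    pcomp (X * h) g = g * pcomp h g := by
  ext N
  rw [coeff_pcomp_of_lt hg0 _ (by omega : N < N + 2), sum_range_succ', mul_comm g,
    coeff_pcomp_mul hg0 h g (Nat.lt_succ_self N)]
  simp [coeff_succ_X_mul, pow_succ]

def dyDerivation : Derivation R R⟦X⟧ R⟦X⟧ := (X : R⟦X⟧) • d⁄dX R

@[simp]
lemma dyDerivation_apply (f : R⟦X⟧) : dyDerivation f = Dy f := by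
  ext (_ | N) <;> simp [dyDerivation, Dy, Derivation.smul_apply, coeff_derivative, mul_comm]

lemma sum_coeff_mul_coeff_derivation_pow {S : Type*} [CommSemiring S] [Algebra S R⟦X⟧]
    (E : Derivation S R⟦X⟧ R⟦X⟧) {g : R⟦X⟧} (hg0 : coeff 0 g = 0) (hE0 : coeff 0 (E g) = 0)
    (h : R⟦X⟧) (N : ℕ) :
    ∑ n ∈ range (N + 1), coeff n h * coeff N (E (g ^ n)) =
      coeff N (pcomp (d⁄dX R h) g * E g) := by
  have hlast : coeff N (g ^ N * E g) = 0 := by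
    refine coeff_of_lt_order N (lt_of_lt_of_le ?_ (le_order_mul _ _))
    calc (N : ℕ∞) < N + 1 := by exact_mod_cast N.lt_succ_self
      _ ≤ order (g ^ N) + order (E g) := add_le_add
          (le_order_pow_of_constantCoeff_eq_zero N (by rwa [← coeff_zero_eq_constantCoeff_apply]))
          (one_le_order_iff_constCoeff_eq_zero.mpr (by rwa [← coeff_zero_eq_constantCoeff_apply]))
  rw [coeff_pcomp_mul hg0 _ _ N.lt_succ_self, sum_range_succ', sum_range_succ, hlast, pow_zero,
    E.map_one_eq_zero, map_zero, mul_zero, mul_zero, add_zero, add_zero]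
  refine sum_congr rfl fun n _ => ?_
  rw [E.leibniz_pow, map_nsmul, Nat.add_sub_cancel, smul_eq_mul, coeff_derivative, nsmul_eq_mul]
  push_cast
  ring

lemma Dy_pcomp {g : R⟦X⟧} (hg0 : coeff 0 g = 0) (h : R⟦X⟧) :
    Dy (pcomp h g) = pcomp (d⁄dX R h) g * Dy g := by
  ext N
  rw [← dyDerivation_apply g,
    ← sum_coeff_mul_coeff_derivation_pow dyDerivation hg0 (by simp [Dy]) h N]
  simp only [dyDerivation_apply, Dy, pcomp, coeff_mk, smul_sum, mul_smul_comm]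

lemma Dy_X_mul (f : R⟦X⟧) : Dy (X * f) = X * f + X * Dy f := by
  have hX : Dy (X : R⟦X⟧) = X := by
    ext (_ | _ | n) <;> simp [Dy, coeff_X]
  rw [← dyDerivation_apply, Derivation.leibniz]
  simp only [dyDerivation_apply, hX, smul_eq_mul]
  ring

lemma eq_zero_of_eq_X_mul_mul {v w : R⟦X⟧} (hv : v = X * w * v) : v = 0 := by
  ext N
  induction N using Nat.strong_induction_on with
  | _ N ih =>
    rw [hv, coeff_mul, map_zero]
    refine sum_eq_zero fun p hp => ?_
    rcases Nat.eq_zero_or_pos p.1 with h1 | h1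
    · simp [h1]
    · rw [ih p.2 (by have := mem_antidiagonal.mp hp; omega), map_zero, mul_zero]

variable [Algebra ℚ R] (D : Derivation ℚ R R)

@[simp]
lemma coeff_Dc (f : R⟦X⟧) (n : ℕ) : coeff n (Dc D f) = D (coeff n f) := coeff_mk _ _

def dcDerivation : Derivation ℚ R⟦X⟧ R⟦X⟧ where
  toFun := Dc D
  map_add' f g := by ext n; simp
  map_smul' q f := by ext n; simp
  map_one_eq_zero' := by ext n; simp [coeff_one, apply_ite D]
  leibniz' f g := by
    show Dc D (f * g) = f * Dc D g + g * Dc D f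
    rw [mul_comm g]
    ext N
    rw [map_add, coeff_Dc, coeff_mul, map_sum, coeff_mul, coeff_mul, add_comm, ← sum_add_distrib]
    refine sum_congr rfl fun p _ => ?_
    simp only [coeff_Dc, D.leibniz, smul_eq_mul]
    ring

@[simp]
lemma dcDerivation_apply (f : R⟦X⟧) : dcDerivation D f = Dc D f := rfl

lemma Dc_pcomp {g : R⟦X⟧} (hg0 : coeff 0 g = 0) (h : R⟦X⟧) :
    Dc D (pcomp h g) = pcomp (Dc D h) g + pcomp (d⁄dX R h) g * Dc D g := by
  ext N
  rw [map_add, ← dcDerivation_apply D g,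
    ← sum_coeff_mul_coeff_derivation_pow (dcDerivation D) hg0 (by simp [hg0]) h N]
  simp only [coeff_Dc, dcDerivation_apply, pcomp, coeff_mk, map_sum, D.leibniz, smul_eq_mul,
    sum_add_distrib]
  rw [add_comm]
  simp only [mul_comm]

lemma Dc_X_mul (f : R⟦X⟧) : Dc D (X * f) = X * Dc D f := by
  have hX : Dc D (X : R⟦X⟧) = 0 := by
    ext n
    simp [coeff_X, apply_ite D]
  rw [← dcDerivation_apply, Derivation.leibniz]
  simp only [dcDerivation_apply, hX, smul_eq_mul, mul_zero, add_zero]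

end

theorem stmt13_general {R : Type*} [CommRing R] [Algebra ℚ R] (D : Derivation ℚ R R)
    (h g : PowerSeries R)
    (hg0 : PowerSeries.coeff 0 g = 0)
    (hcomp : PowerSeries.X * pcomp h g = g)
    (hDA : Dc D h = PowerSeries.X * h) :
    Dc D g = g * Dy g := by
  set T := pcomp (d⁄dX R h) g
  have hDc : Dc D g = g * g + X * T * Dc D g := by
    conv_lhs => rw [← hcomp]
    rw [Dc_X_mul, Dc_pcomp D hg0, hDA, pcomp_X_mul hg0]
    linear_combination g * hcomp
  have hDy : Dy g = g + X * T * Dy g := by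
    conv_lhs => rw [← hcomp]
    rw [Dy_X_mul, Dy_pcomp hg0, hcomp, mul_assoc]
  refine sub_eq_zero.mp (eq_zero_of_eq_X_mul_mul (w := T) ?_)
  linear_combination hDc - g * hDy

/-- **Proposition 3.6** (holomorphic anomaly equation), abstract form.
Write `f(x) = h(x)/x` (so `h = x·f(x)`, with `h` having unit constant term for
`f = Θ(x+z)/Θ(x)`), and let `g(y) = ∑_{m≥1} (φ_m/m) y^m` be the compositional inverse of
`1/f`, i.e. `y·h(g(y)) = g(y)`.  If the derivation `d/dA` satisfies `(d/dA) f = x·f`,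
i.e. `(d/dA) h = x·h`, then `(d/dA) g = g · D_y g`. -/
theorem stmt13 {R : Type*} [CommRing R] [Algebra ℚ R] (D : Derivation ℚ R R)
    (h g : PowerSeries R)
    (hg0 : PowerSeries.coeff 0 g = 0) (hg1 : IsUnit (PowerSeries.coeff 1 g))
    (hcomp : PowerSeries.X * pcomp h g = g)
    (hDA : Dc D h = PowerSeries.X * h) :
    Dc D g = g * Dy g :=
  stmt13_general D h g hg0 hcomp hDA

end
end

section
/- Let g be an invertible formal series (a 'meromorphic Jacobi form of weight -1') in a commutative ℚ-algebra with derivation D_τ, and set E = D_τ(g)/g and H = D_τ^2(g)/g. Let θ_g = D_τ + E·wt be the modified Serre derivative, where wt acts by multiplication by the weight. Then for f of weight k, setting f = g_{k+1}/g^{k+1}, the equation D_τ^2 g_{k+1} = (k+1)^2 H g_{k+1} is equivalent to D_τ^2 f + 2(k+1) E D_τ f + k(k+1)(E^2 - H) f = 0, which is equivalent to θ_g^2 f = H·k(k+2)·f (i.e. θ_g applied twice, with f of weight k so θ_g f has weight k+2: (D_τ + (k+2)E)(D_τ + kE) f = k(k+2) H f). -/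
/-!
Write `g_{k+1} = f u` with `u = g^{k+1}`, whose logarithmic derivative is `(k+1) E`. The
logarithmic derivative of `g` satisfies the Riccati equation `D E = H - E²`, so the Leibniz rule
gives `D²(f u) = (D² f + 2(k+1) E D f + ((k+1) H + k(k+1) E²) f) u`; cancelling the unit `u`,
both equivalences become linear identities among `D² f`, `E D f`, `E² f` and `H f`.
-/

namespace Derivation

variable {R A : Type*} [CommRing R] [CommRing A] [Algebra R A] (D : Derivation R A A)

theorem leibniz_units_inv (u : Aˣ) : D ↑u⁻¹ = -(D u * ↑u⁻¹) * ↑u⁻¹ := by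
  rw [D.leibniz_of_mul_eq_one u.inv_mul, smul_eq_mul]
  ring

theorem leibniz_units_zpow (u : Aˣ) (n : ℤ) : D ↑(u ^ n) = n * (D u * ↑u⁻¹) * ↑(u ^ n) := by
  induction n using Int.induction_on with
  | zero => simp
  | succ m ih =>
    rw [zpow_add_one, Units.val_mul, D.leibniz, smul_eq_mul, smul_eq_mul, ih]
    push_cast
    linear_combination -(↑(u ^ (m : ℤ)) * D u) * u.inv_mul
  | pred m ih =>
    rw [zpow_sub_one, Units.val_mul, D.leibniz, smul_eq_mul, smul_eq_mul, ih, leibniz_units_inv]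
    push_cast
    ring

theorem map_logDeriv_units (u : Aˣ) : D (D u * ↑u⁻¹) = D (D u) * ↑u⁻¹ - (D u * ↑u⁻¹) ^ 2 := by
  rw [D.leibniz, smul_eq_mul, smul_eq_mul, leibniz_units_inv]
  ring

theorem map_map_mul_eq_iff {c E H : A} {u : Aˣ} (hc : D c = 0) (hE : D E = H - E ^ 2)
    (hu : D u = c * E * u) (f : A) :
    D (D (f * u)) = c ^ 2 * (H * (f * u)) ↔
      D (D f) + 2 * c * (E * D f) + c * (c - 1) * ((E ^ 2 - H) * f) = 0 := by
  have expand : D (D (f * u))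
      = (D (D f) + 2 * c * (E * D f) + (c * H + c * (c - 1) * E ^ 2) * f) * u := by
    simp only [D.leibniz, map_add, smul_eq_mul, hu, hc, hE]
    ring
  rw [expand, show c ^ 2 * (H * (f * u)) = c ^ 2 * H * f * u by ring, Units.mul_left_inj]
  constructor <;> intro h <;> linear_combination h

end Derivation

/-- **Section 5.1** (the general Kaneko–Zagier construction).
Let `g` be invertible in a commutative `ℚ`-algebra `R` with derivation `D = D_τ`, set
`E = D(g)/g`, `H = D²(g)/g`, and for a weight-`k` element `f` let the modified Serre
derivative be `θ_{g,k}(f) = D f + k E f`.  For `f = g_{k+1}/g^{k+1}`, the following are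
equivalent:
1. `D² g_{k+1} = (k+1)² H g_{k+1}`;
2. `D² f + 2(k+1) E D f + k(k+1)(E² - H) f = 0`;
3. `θ_{g,k+2}(θ_{g,k}(f)) = k(k+2) H f`. -/
theorem stmt19 {R : Type*} [CommRing R] [Algebra ℚ R] (D : Derivation ℚ R R)
    (g : Rˣ) (k : ℤ) (gk : R)
    (E H f : R)
    (hE : E = D (g : R) * ((g⁻¹ : Rˣ) : R))
    (hH : H = D (D (g : R)) * ((g⁻¹ : Rˣ) : R))
    (hf : f = gk * (((g ^ (k + 1))⁻¹ : Rˣ) : R)) :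
    ((D (D gk) = ((k + 1 : ℤ) : R) ^ 2 * (H * gk)) ↔
      (D (D f) + 2 * ((k + 1 : ℤ) : R) * (E * D f)
        + ((k : ℤ) : R) * ((k + 1 : ℤ) : R) * ((E ^ 2 - H) * f) = 0)) ∧
    ((D (D f) + 2 * ((k + 1 : ℤ) : R) * (E * D f)
        + ((k : ℤ) : R) * ((k + 1 : ℤ) : R) * ((E ^ 2 - H) * f) = 0) ↔
      (D (D f + ((k : ℤ) : R) * (E * f))
        + ((k + 2 : ℤ) : R) * (E * (D f + ((k : ℤ) : R) * (E * f)))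
        = ((k : ℤ) : R) * ((k + 2 : ℤ) : R) * (H * f))) := by
  have hDE : D E = H - E ^ 2 := by rw [hE, hH]; exact D.map_logDeriv_units g
  have hgk : gk = f * ↑(g ^ (k + 1)) := by rw [hf, mul_assoc, Units.inv_mul, mul_one]
  have twist := D.map_map_mul_eq_iff (D.map_intCast (k + 1)) hDE
    (by rw [hE]; exact D.leibniz_units_zpow g (k + 1)) f
  have hθθ : D (D f + ((k : ℤ) : R) * (E * f))
      = D (D f) + ((k : ℤ) : R) * (E * D f + f * (H - E ^ 2)) := by
    simp only [map_add, D.leibniz, smul_eq_mul, hDE, D.map_intCast]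
    ring
  rw [hgk, twist, hθθ]
  push_cast
  constructor <;> constructor <;> intro h <;> linear_combination h
end
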